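/- The interval family used in the FPSPACE-hardness construction for LipIVP covers [0,1): For each binary string v of length ℓ with value v̄ ∈ {0, …, 2^ℓ − 1} (reading v as an integer in binary, leading zeros allowed), set c_v = 1 − 2^(−ℓ) + (2·v̄ + 1)/2^(2ℓ+2), l⁻_v = c_v − 2^(−(2ℓ+2)), and l⁺_v = c_v + 2^(−(2ℓ+2)). Then (a) the union over all binary strings v of the closed intervals [l⁻_v, l⁺_v] equals [0,1), and (b) for any two distinct binary strings v ≠ v', the open intervals (l⁻_v, l⁺_v) and (l⁻_{v'}, l⁺_{v'}) are disjoint. -/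

import Mathlib

open Set

/-- The natural number obtained by reading a binary string (a list of Booleans,
most significant bit first) as an integer in binary notation. -/
def binVal : List Bool → ℕ
  | [] => 0
  | b :: rest => (if b then 1 else 0) * 2 ^ rest.length + binVal rest

/-- The centre `c_v` of the interval associated with the binary string `v`. -/
noncomputable def cOf (v : List Bool) : ℝ :=
  1 - 1 / 2 ^ v.length + (2 * (binVal v : ℝ) + 1) / 2 ^ (2 * v.length + 2)

/-- The left endpoint `l⁻_v`. -/
noncomputable def lMinus (v : List Bool) : ℝ := cOf v - 1 / 2 ^ (2 * v.length + 2)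

/-- The right endpoint `l⁺_v`. -/
noncomputable def lPlus (v : List Bool) : ℝ := cOf v + 1 / 2 ^ (2 * v.length + 2)

/-!
The intervals attached to strings of length `ℓ` have length `2^-(2ℓ+1)`; ordered by `binVal`
they tile the block `[1 - 2^-ℓ, 1 - 2^-(ℓ+1)]`, since `2^ℓ` steps of that length cover
`2^-(ℓ+1)`. These blocks in turn tile `[0,1)`. Distinct strings of the same length have
distinct values, so any two distinct strings are strictly ordered by (length, value), and
the interval of the smaller one ends where or before the other one starts.
-/

lemma binVal_lt (v : List Bool) : binVal v < 2 ^ v.length := by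
  induction v with
  | nil => simp [binVal]
  | cons b r ih =>
    simp only [binVal, List.length_cons, pow_succ]
    cases b <;> simp <;> omega

lemma eq_of_length_eq_of_binVal_eq {v w : List Bool} (hlen : v.length = w.length)
    (hval : binVal v = binVal w) : v = w := by
  induction v generalizing w with
  | nil => exact (List.length_eq_zero_iff.1 hlen.symm).symm
  | cons b r ih =>
    cases w with
    | nil => simp at hlen
    | cons b' r' =>
      simp only [List.length_cons, add_left_inj] at hlen
      have hr : binVal r < 2 ^ r'.length := hlen ▸ binVal_lt r
      have hr' := binVal_lt r'
      simp only [binVal, hlen] at hval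
      obtain rfl : b = b' := by cases b <;> cases b' <;> simp at hval ⊢ <;> omega
      rw [ih hlen (by omega)]

lemma exists_length_eq_binVal_eq {ℓ n : ℕ} (hn : n < 2 ^ ℓ) :
    ∃ v : List Bool, v.length = ℓ ∧ binVal v = n := by
  induction ℓ generalizing n with
  | zero => exact ⟨[], rfl, by simp_all [binVal]⟩
  | succ ℓ ih =>
    rw [pow_succ] at hn
    by_cases hlow : n < 2 ^ ℓ
    · obtain ⟨v, rfl, hv⟩ := ih hlow
      exact ⟨false :: v, rfl, by simp [binVal, hv]⟩
    · obtain ⟨v, rfl, hv⟩ := ih (n := n - 2 ^ ℓ) (by omega)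
      exact ⟨true :: v, rfl, by simp [binVal, hv]; omega⟩

noncomputable def blockStart (ℓ : ℕ) : ℝ := 1 - 1 / 2 ^ ℓ

lemma blockStart_zero : blockStart 0 = 0 := by simp [blockStart]

lemma blockStart_monotone : Monotone blockStart := fun _ _ h => by
  unfold blockStart
  gcongr
  norm_num

lemma exists_lt_blockStart {x : ℝ} (hx : x < 1) : ∃ N, x < blockStart N := by
  obtain ⟨N, hN⟩ := exists_pow_lt_of_lt_one (sub_pos.2 hx) (by norm_num : (1 / 2 : ℝ) < 1)
  exact ⟨N, by rw [blockStart, ← one_div_pow]; linarith⟩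

lemma blockStart_add_two_pow_div (ℓ : ℕ) :
    blockStart ℓ + 2 ^ ℓ / 2 ^ (2 * ℓ + 1) = blockStart (ℓ + 1) := by
  unfold blockStart
  field_simp
  ring

lemma lMinus_eq (v : List Bool) :
    lMinus v = blockStart v.length + binVal v / 2 ^ (2 * v.length + 1) := by
  unfold lMinus cOf blockStart
  field_simp
  ring

lemma lPlus_eq (v : List Bool) :
    lPlus v = blockStart v.length + (binVal v + 1) / 2 ^ (2 * v.length + 1) := by
  unfold lPlus cOf blockStart
  field_simp
  ring

lemma blockStart_le_lMinus (v : List Bool) : blockStart v.length ≤ lMinus v := by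
  rw [lMinus_eq]
  exact le_add_of_nonneg_right (by positivity)

lemma lPlus_le_blockStart_succ (v : List Bool) : lPlus v ≤ blockStart (v.length + 1) := by
  have hval : (binVal v + 1 : ℝ) ≤ 2 ^ v.length := by exact_mod_cast binVal_lt v
  rw [lPlus_eq, ← blockStart_add_two_pow_div]
  gcongr

lemma lPlus_le_lMinus_of_length_lt {v w : List Bool} (h : v.length < w.length) :
    lPlus v ≤ lMinus w :=
  (lPlus_le_blockStart_succ v).trans <|
    (blockStart_monotone h).trans (blockStart_le_lMinus w)

lemma lPlus_le_lMinus_of_binVal_lt {v w : List Bool} (hlen : v.length = w.length)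
    (hval : binVal v < binVal w) : lPlus v ≤ lMinus w := by
  have hval' : (binVal v + 1 : ℝ) ≤ binVal w := by exact_mod_cast hval
  rw [lPlus_eq, lMinus_eq, hlen]
  gcongr

lemma lPlus_le_lMinus_or_of_ne {v w : List Bool} (h : v ≠ w) :
    lPlus v ≤ lMinus w ∨ lPlus w ≤ lMinus v := by
  rcases lt_trichotomy v.length w.length with hlen | hlen | hlen
  · exact .inl (lPlus_le_lMinus_of_length_lt hlen)
  · rcases lt_trichotomy (binVal v) (binVal w) with hval | hval | hval
    · exact .inl (lPlus_le_lMinus_of_binVal_lt hlen hval)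
    · exact absurd (eq_of_length_eq_of_binVal_eq hlen hval) h
    · exact .inr (lPlus_le_lMinus_of_binVal_lt hlen.symm hval)
  · exact .inr (lPlus_le_lMinus_of_length_lt hlen)

lemma Ico_blockStart_subset_iUnion (ℓ : ℕ) :
    Ico (blockStart ℓ) (blockStart (ℓ + 1)) ⊆ ⋃ v : List Bool, Icc (lMinus v) (lPlus v) := by
  set a : ℕ → ℝ := fun i => blockStart ℓ + i / 2 ^ (2 * ℓ + 1)
  have ha : Ico (a 0) (a (2 ^ ℓ)) = Ico (blockStart ℓ) (blockStart (ℓ + 1)) := by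
    simp only [a, CharP.cast_eq_zero, zero_div, add_zero, Nat.cast_pow, Nat.cast_ofNat,
      blockStart_add_two_pow_div]
  rw [← ha]
  refine (Ico_subset_biUnion_Ico _ a).trans (iUnion₂_subset fun i hi => ?_)
  obtain ⟨v, rfl, rfl⟩ := exists_length_eq_binVal_eq (Finset.mem_range.1 hi)
  refine Ico_subset_Icc_self.trans (subset_iUnion_of_subset v ?_)
  simp only [a, lMinus_eq, lPlus_eq, Nat.cast_add, Nat.cast_one, subset_refl]

lemma lMinus_nonneg (v : List Bool) : 0 ≤ lMinus v :=
  blockStart_zero ▸ (blockStart_monotone (Nat.zero_le _)).trans (blockStart_le_lMinus v)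

lemma lPlus_lt_one (v : List Bool) : lPlus v < 1 :=
  (lPlus_le_blockStart_succ v).trans_lt (sub_lt_self 1 (by positivity))

/-- The interval family used in the FPSPACE-hardness construction for `LipIVP`
covers `[0,1)`, and the corresponding open intervals are pairwise disjoint. -/
theorem lipivp_interval_family_covers :
    (⋃ v : List Bool, Icc (lMinus v) (lPlus v)) = Ico (0:ℝ) 1 ∧
    ∀ v v' : List Bool, v ≠ v' →
      Disjoint (Ioo (lMinus v) (lPlus v)) (Ioo (lMinus v') (lPlus v')) := by
  refine ⟨Subset.antisymm ?_ ?_, fun v v' h => ?_⟩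
  · exact iUnion_subset fun v => Icc_subset_Ico (lMinus_nonneg v) (lPlus_lt_one v)
  · rintro x ⟨hx0, hx1⟩
    obtain ⟨N, hN⟩ := exists_lt_blockStart hx1
    have hx : x ∈ Ico (blockStart 0) (blockStart N) := ⟨blockStart_zero ▸ hx0, hN⟩
    obtain ⟨ℓ, -, hℓ⟩ := mem_iUnion₂.1 (Ico_subset_biUnion_Ico N blockStart hx)
    exact Ico_blockStart_subset_iUnion ℓ hℓ
  · rw [Ioo_disjoint_Ioo]
    rcases lPlus_le_lMinus_or_of_ne h with hle | hle
    · exact (min_le_left _ _).trans (hle.trans (le_max_right _ _))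
    · exact (min_le_right _ _).trans (hle.trans (le_max_left _ _))
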